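/- arXiv:2201.01729 — 2 statements merged into one kernel-verified Lean document; each statement's English description precedes it below -/
import Mathlib

section
/- Let m be a basic probability assignment on a finite nonempty set Θ with 0 < k_Bel < 1. Then the intersection probability is an affine combination of the relative belief and the relative plausibility of singletons: for every x ∈ Θ, p[Bel](x) = (1 − β[Bel])·k_Bel·(m(x)/k_Bel) + β[Bel]·k_Pl·(Pl(x)/k_Pl), and the two coefficients sum to one: (1 − β[Bel])·k_Bel + β[Bel]·k_Pl = 1. Hence p[Bel] lies on the line joining the relative belief of singletons and the relative plausibility of singletons. -/
open Finset

/-- A basic probability assignment on a finite set `Θ`. -/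
def IsBPA {Θ : Type*} [Fintype Θ] (m : Finset Θ → ℝ) : Prop :=
  m ∅ = 0 ∧ (∀ A, 0 ≤ m A) ∧ (∑ A : Finset Θ, m A) = 1

/-- Belief function `Bel(A) = ∑_{B ⊆ A} m(B)`. -/
noncomputable def Bel {Θ : Type*} [Fintype Θ] [DecidableEq Θ] (m : Finset Θ → ℝ)
    (A : Finset Θ) : ℝ :=
  ∑ B ∈ A.powerset, m B

/-- Plausibility function `Pl(A) = ∑_{B ∩ A ≠ ∅} m(B)`. -/
noncomputable def Pl {Θ : Type*} [Fintype Θ] [DecidableEq Θ] (m : Finset Θ → ℝ)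
    (A : Finset Θ) : ℝ :=
  ∑ B ∈ Finset.univ.filter (fun B => B ∩ A ≠ ∅), m B

/-- Total mass of singletons `k_Bel`. -/
noncomputable def kBel {Θ : Type*} [Fintype Θ] (m : Finset Θ → ℝ) : ℝ :=
  ∑ x : Θ, m {x}

/-- Total plausibility of singletons `k_Pl`. -/
noncomputable def kPl {Θ : Type*} [Fintype Θ] [DecidableEq Θ] (m : Finset Θ → ℝ) : ℝ :=
  ∑ x : Θ, Pl m {x}

/-- `β[Bel] = (1 - k_Bel)/(k_Pl - k_Bel)`. -/
noncomputable def betaBel {Θ : Type*} [Fintype Θ] [DecidableEq Θ] (m : Finset Θ → ℝ) : ℝ :=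
  (1 - kBel m) / (kPl m - kBel m)

/-- The intersection probability `p[Bel](x) = m(x) + β[Bel]⬝(Pl(x) - m(x))`. -/
noncomputable def pInt {Θ : Type*} [Fintype Θ] [DecidableEq Θ] (m : Finset Θ → ℝ)
    (x : Θ) : ℝ :=
  m {x} + betaBel m * (Pl m {x} - m {x})

/-!
Since `Pl(x) = ∑_{B ∋ x} m(B)`, summing over `x` counts each focal set once per element, so
`k_Pl = ∑_B |B| m(B) ≥ ∑_B m(B) = 1 > k_Bel`. Hence `β[Bel]` is a genuine quotient,
`β[Bel]⬝(k_Pl - k_Bel) = 1 - k_Bel` gives the coefficient identity, and the pointwise identity is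
`p[Bel](x) = (1 - β[Bel])⬝m(x) + β[Bel]⬝Pl(x)` once `k_Bel` and `k_Pl` are cancelled.
-/

section

variable {Θ : Type*} [Fintype Θ] [DecidableEq Θ] (m : Finset Θ → ℝ)

lemma Pl_singleton (x : Θ) : Pl m {x} = ∑ B with x ∈ B, m B := by
  unfold Pl
  congr! 2 with B
  rw [Ne, ← disjoint_iff_inter_eq_empty, disjoint_singleton_right, not_not]

lemma kPl_eq_sum_card_mul : kPl m = ∑ B : Finset Θ, (#B : ℝ) * m B := by
  simp only [kPl, Pl_singleton, sum_filter]
  rw [sum_comm]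
  simp [sum_ite_mem]

lemma one_le_kPl (hm : IsBPA m) : 1 ≤ kPl m := by
  obtain ⟨hempty, hnonneg, hsum⟩ := hm
  rw [kPl_eq_sum_card_mul, ← hsum]
  refine sum_le_sum fun B _ => ?_
  rcases B.eq_empty_or_nonempty with rfl | hB
  · simp [hempty]
  · exact le_mul_of_one_le_left (hnonneg B) (by exact_mod_cast hB.card_pos)

lemma pInt_eq_affine_relBel_relPl (hBel : kBel m ≠ 0) (hPl : kPl m ≠ 0) (x : Θ) :
    pInt m x = (1 - betaBel m) * kBel m * (m {x} / kBel m) +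
      betaBel m * kPl m * (Pl m {x} / kPl m) := by
  rw [pInt, mul_assoc, mul_div_cancel₀ _ hBel, mul_assoc, mul_div_cancel₀ _ hPl]
  ring

lemma betaBel_mul_sub (h : kBel m ≠ kPl m) :
    betaBel m * (kPl m - kBel m) = 1 - kBel m :=
  div_mul_cancel₀ _ (sub_ne_zero.mpr h.symm)

end

theorem pInt_affine_combination_relBel_relPl_general
    {Θ : Type*} [Fintype Θ] [DecidableEq Θ] (m : Finset Θ → ℝ)
    (hm : IsBPA m) (h0 : 0 < kBel m) (h1 : kBel m < 1) :
    (∀ x : Θ, pInt m x =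
      (1 - betaBel m) * kBel m * (m {x} / kBel m) +
        betaBel m * kPl m * (Pl m {x} / kPl m)) ∧
    (1 - betaBel m) * kBel m + betaBel m * kPl m = 1 := by
  have hPl : 1 ≤ kPl m := one_le_kPl m hm
  refine ⟨pInt_eq_affine_relBel_relPl m h0.ne' (by linarith), ?_⟩
  linear_combination betaBel_mul_sub m (by linarith : kBel m ≠ kPl m)

/-- the intersection probability is the affine combination of the relative
belief of singletons `m(x)/k_Bel` and the relative plausibility of singletons `Pl(x)/k_Pl`
with coefficients `(1 - β[Bel])⬝k_Bel` and `β[Bel]⬝k_Pl`, which sum to one; hence `p[Bel]`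
lies on the line joining the two relative transforms. -/
theorem pInt_affine_combination_relBel_relPl
    {Θ : Type*} [Fintype Θ] [DecidableEq Θ] [Nonempty Θ] (m : Finset Θ → ℝ)
    (hm : IsBPA m) (h0 : 0 < kBel m) (h1 : kBel m < 1) :
    (∀ x : Θ, pInt m x =
      (1 - betaBel m) * kBel m * (m {x} / kBel m) +
        betaBel m * kPl m * (Pl m {x} / kPl m)) ∧
    (1 - betaBel m) * kBel m + betaBel m * kPl m = 1 :=
  pInt_affine_combination_relBel_relPl_general m hm h0 h1
end

section
/- Let m₁, m₂ be basic probability assignments on a finite nonempty set Θ with D₁ > 0 and D₂ > 0, where Dᵢ = ∑_{A⊆Θ, |A|>1} |A|·mᵢ(A). For each cardinality k, set σ⁽ⁱ⁾_k = ∑_{A⊆Θ, |A|=k} mᵢ(A). If σ⁽¹⁾_l·σ⁽²⁾_j = σ⁽²⁾_l·σ⁽¹⁾_j for all l, j ≥ 2 (i.e., the ratio between the total masses of focal elements of different cardinalities is the same for both BPAs), then the intersection probability commutes with convex combination: p[α₁Bel₁ + α₂Bel₂](x) = α₁·p[Bel₁](x) + α₂·p[Bel₂](x) for all α₁ ∈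 [0,1] (α₂ = 1 − α₁) and all x ∈ Θ. -/
open Finset

/-- `N = ∑_{|A| > 1} m(A)`, total mass of non-singleton focal elements. -/
noncomputable def bigN {Θ : Type*} [Fintype Θ] (m : Finset Θ → ℝ) : ℝ :=
  ∑ A ∈ Finset.univ.filter (fun A : Finset Θ => 1 < A.card), m A

/-- `D = ∑_{|A| > 1} |A|⬝m(A)`. -/
noncomputable def bigD {Θ : Type*} [Fintype Θ] (m : Finset Θ → ℝ) : ℝ :=
  ∑ A ∈ Finset.univ.filter (fun A : Finset Θ => 1 < A.card), (A.card : ℝ) * m A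

/-- `β = N/D`. -/
noncomputable def betaND {Θ : Type*} [Fintype Θ] (m : Finset Θ → ℝ) : ℝ :=
  bigN m / bigD m

/-- Intersection probability `p[Bel](x) = m(x) + β⬝(Pl(x) - m(x))` with `β = N/D`. -/
noncomputable def pIntND {Θ : Type*} [Fintype Θ] [DecidableEq Θ]
    (m : Finset Θ → ℝ) (x : Θ) : ℝ :=
  m {x} + betaND m * (Pl m {x} - m {x})

/-- `σ_k = ∑_{|A| = k} m(A)`, total mass of focal elements of cardinality `k`. -/
noncomputable def sigmaCard {Θ : Type*} [Fintype Θ] (m : Finset Θ → ℝ) (k : ℕ) : ℝ :=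
  ∑ A ∈ Finset.univ.filter (fun A : Finset Θ => A.card = k), m A

/-! Since `N` and `D` are linear in `m`, the `β` of an affine combination is a mediant of
`N₁/D₁` and `N₂/D₂`. Grouping the focal elements by cardinality writes `N = ∑ σ_k` and
`D = ∑ k σ_k`, so proportional `σ`'s give `N₁ D₂ = N₂ D₁`: the two `β`'s, and hence their
mediant, coincide, and with a common `β` the intersection probability is affine in `m`. -/

section Cardinality

variable {Θ : Type*} [Fintype Θ]

lemma sum_filter_one_lt_card_eq_sum_Icc (f : Finset Θ → ℝ) :
    ∑ A ∈ univ.filter (fun A : Finset Θ => 1 < A.card), f A =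
      ∑ k ∈ Icc 2 (Fintype.card Θ), ∑ A ∈ univ.filter (fun A : Finset Θ => A.card = k), f A := by
  rw [← sum_fiberwise_of_maps_to (s := univ.filter fun A : Finset Θ => 1 < A.card)
    (g := Finset.card) (t := Icc 2 (Fintype.card Θ))
    (fun A hA => mem_Icc.2 ⟨(mem_filter.1 hA).2, card_le_univ A⟩)]
  refine sum_congr rfl fun k hk => ?_
  rw [filter_filter]
  refine sum_congr (filter_congr fun A _ => ?_) fun _ _ => rfl
  have hk₂ := (mem_Icc.1 hk).1
  exact ⟨And.right, fun hA => ⟨by omega, hA⟩⟩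

lemma bigN_eq_sum_sigmaCard (m : Finset Θ → ℝ) :
    bigN m = ∑ k ∈ Icc 2 (Fintype.card Θ), sigmaCard m k :=
  sum_filter_one_lt_card_eq_sum_Icc m

lemma bigD_eq_sum_sigmaCard (m : Finset Θ → ℝ) :
    bigD m = ∑ k ∈ Icc 2 (Fintype.card Θ), (k : ℝ) * sigmaCard m k := by
  rw [bigD, sum_filter_one_lt_card_eq_sum_Icc]
  refine sum_congr rfl fun k _ => ?_
  rw [sigmaCard, mul_sum]
  refine sum_congr rfl fun A hA => ?_
  rw [(mem_filter.1 hA).2]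

lemma bigN_mul_bigD_comm_of_sigmaCard_mul_comm {m₁ m₂ : Finset Θ → ℝ}
    (hσ : ∀ l j : ℕ, 2 ≤ l → 2 ≤ j →
      sigmaCard m₁ l * sigmaCard m₂ j = sigmaCard m₂ l * sigmaCard m₁ j) :
    bigN m₁ * bigD m₂ = bigN m₂ * bigD m₁ := by
  simp only [bigN_eq_sum_sigmaCard, bigD_eq_sum_sigmaCard, sum_mul_sum]
  refine sum_congr rfl fun l hl => sum_congr rfl fun j hj => ?_
  have h := hσ l j (mem_Icc.1 hl).1 (mem_Icc.1 hj).1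
  linear_combination (j : ℝ) * h

end Cardinality

section AffineCombination

variable {Θ : Type*} [Fintype Θ] (m₁ m₂ : Finset Θ → ℝ) (a b : ℝ)

lemma bigN_affineComb : bigN (fun A => a * m₁ A + b * m₂ A) = a * bigN m₁ + b * bigN m₂ := by
  simp only [bigN, sum_add_distrib, mul_sum]

lemma bigD_affineComb : bigD (fun A => a * m₁ A + b * m₂ A) = a * bigD m₁ + b * bigD m₂ := by
  simp only [bigD, mul_add, sum_add_distrib, mul_sum, mul_left_comm]

lemma Pl_affineComb [DecidableEq Θ] (A : Finset Θ) :
    Pl (fun B => a * m₁ B + b * m₂ B) A = a * Pl m₁ A + b * Pl m₂ A := by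
  simp only [Pl, sum_add_distrib, mul_sum]

variable {m₁ m₂}

lemma betaND_affineComb_of_bigN_mul_bigD_comm (hD₁ : bigD m₁ ≠ 0)
    (hD : a * bigD m₁ + b * bigD m₂ ≠ 0) (hND : bigN m₁ * bigD m₂ = bigN m₂ * bigD m₁) :
    betaND (fun A => a * m₁ A + b * m₂ A) = betaND m₁ := by
  rw [betaND, betaND, bigN_affineComb, bigD_affineComb, div_eq_div_iff hD hD₁]
  linear_combination (-b) * hND

lemma pIntND_affineComb_of_betaND_eq [DecidableEq Θ] (x : Θ)
    (h₁ : betaND (fun A => a * m₁ A + b * m₂ A) = betaND m₁)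
    (h₂ : betaND m₂ = betaND m₁) :
    pIntND (fun A => a * m₁ A + b * m₂ A) x = a * pIntND m₁ x + b * pIntND m₂ x := by
  rw [pIntND, pIntND, pIntND, h₁, h₂, Pl_affineComb]
  ring

end AffineCombination

theorem pInt_commutes_of_proportional_sigmas_general
    {Θ : Type*} [Fintype Θ] [DecidableEq Θ]
    (m₁ m₂ : Finset Θ → ℝ)
    (hD₁ : 0 < bigD m₁) (hD₂ : 0 < bigD m₂)
    (hσ : ∀ l j : ℕ, 2 ≤ l → 2 ≤ j →
      sigmaCard m₁ l * sigmaCard m₂ j = sigmaCard m₂ l * sigmaCard m₁ j) :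
    ∀ α₁ : ℝ, 0 ≤ α₁ → α₁ ≤ 1 → ∀ x : Θ,
      pIntND (fun A => α₁ * m₁ A + (1 - α₁) * m₂ A) x =
        α₁ * pIntND m₁ x + (1 - α₁) * pIntND m₂ x := by
  intro α₁ hα₀ hα₁ x
  have hND := bigN_mul_bigD_comm_of_sigmaCard_mul_comm hσ
  have hD : 0 < α₁ * bigD m₁ + (1 - α₁) * bigD m₂ :=
    convex_Ioi (0 : ℝ) hD₁ hD₂ hα₀ (sub_nonneg.2 hα₁) (add_sub_cancel α₁ 1)
  have hβ₂ : betaND m₂ = betaND m₁ := by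
    rw [betaND, betaND, div_eq_div_iff hD₂.ne' hD₁.ne']
    exact hND.symm
  exact pIntND_affineComb_of_betaND_eq α₁ (1 - α₁) x
    (betaND_affineComb_of_bigN_mul_bigD_comm α₁ (1 - α₁) hD₁.ne' hD.ne' hND) hβ₂

/-- Theorem 10: if the ratios between the total masses of focal elements
of the various cardinalities `≥ 2` agree for the two BPAs, then the intersection
probability commutes with convex combination. -/
theorem pInt_commutes_of_proportional_sigmas
    {Θ : Type*} [Fintype Θ] [DecidableEq Θ] [Nonempty Θ]
    (m₁ m₂ : Finset Θ → ℝ) (hm₁ : IsBPA m₁) (hm₂ : IsBPA m₂)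
    (hD₁ : 0 < bigD m₁) (hD₂ : 0 < bigD m₂)
    (hσ : ∀ l j : ℕ, 2 ≤ l → 2 ≤ j →
      sigmaCard m₁ l * sigmaCard m₂ j = sigmaCard m₂ l * sigmaCard m₁ j) :
    ∀ α₁ : ℝ, 0 ≤ α₁ → α₁ ≤ 1 → ∀ x : Θ,
      pIntND (fun A => α₁ * m₁ A + (1 - α₁) * m₂ A) x =
        α₁ * pIntND m₁ x + (1 - α₁) * pIntND m₂ x :=
  pInt_commutes_of_proportional_sigmas_general m₁ m₂ hD₁ hD₂ hσ
end
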